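/- Let λ > 0 and define f: [0,1] → ℝ by f(ω) = R_B(ω) − λ R_E(ω), where R_B(ω) = 1/4 + (1/2)min(ω,1−ω) and R_E(ω) = (13/4)ω on [0,3/13], = 3/4 on [3/13,10/13], = (13/4)(1−ω) on [10/13,1]. Then the minimum of f over [0,1] equals 1/4 if λ ≤ 2/13 and equals 19/52 − (3/4)λ if λ ≥ 2/13; moreover, if λ > 2/13 the set of minimizers of f is exactly {3/13, 10/13}, and if λ < 2/13 it is exactly {0, 1}. -/

import Mathlib

/-! Both risks depend on ω only through its distance `t = min ω (1 - ω)` to `{0, 1}`, which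
ranges over `[0, 1/2]` and equals a given `a ≤ 1/2` exactly at `ω ∈ {a, 1 - a}`. In terms of
`t`, `R_B = 1/4 + t/2` and `R_E = min (13t/4) (3/4)`, so Alice's risk is the maximum of the two
affine functions `1/4 + 13/4 (2/13 - λ) t` and `19/52 - 3λ/4 + (t - 3/13)/2`. For `λ < 2/13`
both increase, so the minimum is at `t = 0`; for `λ > 2/13` the first decreases and the two
cross at `t = 3/13`, where the minimum sits. -/

/-- Bob's integrated Bayes risk under the randomised response mechanism q^(ω). -/
noncomputable def RBfun (ω : ℝ) : ℝ := 1/4 + (1/2) * min ω (1 - ω)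

/-- Eve's integrated Bayes risk under the randomised response mechanism q^(ω):
(13/4)ω on [0, 3/13], 3/4 on [3/13, 10/13], (13/4)(1-ω) on [10/13, 1]. -/
noncomputable def REfun (ω : ℝ) : ℝ :=
  if ω ≤ 3/13 then 13/4 * ω else if ω ≤ 10/13 then 3/4 else 13/4 * (1 - ω)

open Set

theorem setOf_forall_le_eq {α β : Type*} [LinearOrder β] {f : α → β} {s t : Set α}
    {a : α} {m : β} (hts : t ⊆ s) (ha : a ∈ t) (hft : ∀ x ∈ t, f x = m)
    (hlt : ∀ x ∈ s, x ∉ t → m < f x) :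
    {x ∈ s | ∀ y ∈ s, f x ≤ f y} = t := by
  ext x
  constructor
  · rintro ⟨hx, hmin⟩
    by_contra hxt
    exact (hlt x hx hxt).not_ge (hft a ha ▸ hmin a (hts ha))
  · intro hx
    refine ⟨hts hx, fun y hy => hft x hx ▸ ?_⟩
    by_cases hyt : y ∈ t
    · exact (hft y hyt).ge
    · exact (hlt y hy hyt).le

theorem min_self_one_sub_nonneg {ω : ℝ} (hω : ω ∈ Icc (0 : ℝ) 1) : 0 ≤ min ω (1 - ω) :=
  le_min hω.1 (sub_nonneg.2 hω.2)

theorem min_self_one_sub_eq_iff {ω a : ℝ} (ha : a ≤ 1 / 2) :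
    min ω (1 - ω) = a ↔ ω = a ∨ ω = 1 - a := by
  constructor
  · rcases le_total ω (1 - ω) with h | h <;> simp only [min_eq_left, min_eq_right, h] <;>
      intro h' <;> [left; right] <;> linarith
  · rintro (rfl | rfl)
    · exact min_eq_left (by linarith)
    · rw [sub_sub_cancel]; exact min_eq_right (by linarith)

theorem isLeast_image_Icc_of_fold {f g : ℝ → ℝ} (hf : ∀ ω, f ω = g (min ω (1 - ω)))
    {a m : ℝ} (ha : a ∈ Icc (0 : ℝ) (1 / 2)) (hga : g a = m)
    (hle : ∀ t, 0 ≤ t → m ≤ g t) : IsLeast (f '' Icc 0 1) m := by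
  refine ⟨⟨a, ⟨ha.1, by linarith [ha.2]⟩, ?_⟩, ?_⟩
  · rw [hf, min_eq_left (by linarith [ha.2]), hga]
  · rintro _ ⟨ω, hω, rfl⟩
    rw [hf]
    exact hle _ (min_self_one_sub_nonneg hω)

theorem setOf_forall_le_eq_pair_of_fold {f g : ℝ → ℝ} (hf : ∀ ω, f ω = g (min ω (1 - ω)))
    {a m : ℝ} (ha : a ∈ Icc (0 : ℝ) (1 / 2)) (hga : g a = m)
    (hlt : ∀ t, 0 ≤ t → t ≠ a → m < g t) :
    {ω ∈ Icc (0 : ℝ) 1 | ∀ ω' ∈ Icc (0 : ℝ) 1, f ω ≤ f ω'} = {a, 1 - a} := by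
  have hmem : ∀ ω, ω ∈ ({a, 1 - a} : Set ℝ) ↔ min ω (1 - ω) = a := fun ω =>
    (min_self_one_sub_eq_iff ha.2).symm
  refine setOf_forall_le_eq (m := m) ?_ (Or.inl rfl) (fun ω hω => ?_) (fun ω hω hωa => ?_)
  · rintro ω (rfl | rfl) <;> constructor <;> linarith [ha.1, ha.2]
  · rw [hf, (hmem ω).1 hω, hga]
  · rw [hf]
    exact hlt _ (min_self_one_sub_nonneg hω) (mt (hmem ω).2 hωa)

noncomputable def foldedRisk (lam t : ℝ) : ℝ := 1 / 4 + t / 2 - lam * min (13 / 4 * t) (3 / 4)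

theorem REfun_eq_min (ω : ℝ) : REfun ω = min (13 / 4 * min ω (1 - ω)) (3 / 4) := by
  unfold REfun
  rcases le_total ω (1 - ω) with h | h <;> simp only [min_eq_left, min_eq_right, h] <;>
    rw [min_def] <;> split_ifs <;> linarith

theorem RBfun_sub_mul_REfun (lam ω : ℝ) :
    RBfun ω - lam * REfun ω = foldedRisk lam (min ω (1 - ω)) := by
  rw [REfun_eq_min, RBfun, foldedRisk]
  ring

theorem foldedRisk_eq_max {lam : ℝ} (hlam : 0 ≤ lam) (t : ℝ) :
    foldedRisk lam t =
      max (1 / 4 + 13 / 4 * (2 / 13 - lam) * t) (19 / 52 - 3 / 4 * lam + (t - 3 / 13) / 2) := by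
  rw [foldedRisk, mul_min_of_nonneg _ _ hlam, min_def, max_def]
  split_ifs <;> linarith

theorem quarter_le_foldedRisk {lam t : ℝ} (hlam : 0 ≤ lam) (hlam' : lam ≤ 2 / 13) (ht : 0 ≤ t) :
    1 / 4 ≤ foldedRisk lam t := by
  rw [foldedRisk_eq_max hlam]
  exact le_max_of_le_left (by nlinarith [mul_nonneg (sub_nonneg.2 hlam') ht])

theorem quarter_lt_foldedRisk {lam t : ℝ} (hlam : 0 ≤ lam) (hlam' : lam < 2 / 13) (ht : 0 < t) :
    1 / 4 < foldedRisk lam t := by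
  rw [foldedRisk_eq_max hlam]
  exact lt_max_of_lt_left (by nlinarith [mul_pos (sub_pos.2 hlam') ht])

theorem le_foldedRisk {lam : ℝ} (hlam : 2 / 13 ≤ lam) (t : ℝ) :
    19 / 52 - 3 / 4 * lam ≤ foldedRisk lam t := by
  rw [foldedRisk_eq_max (by linarith), le_max_iff]
  rcases le_total t (3 / 13) with ht | ht
  · left
    nlinarith [mul_nonneg (sub_nonneg.2 hlam) (sub_nonneg.2 ht)]
  · right
    linarith

theorem lt_foldedRisk {lam t : ℝ} (hlam : 2 / 13 < lam) (ht : t ≠ 3 / 13) :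
    19 / 52 - 3 / 4 * lam < foldedRisk lam t := by
  rw [foldedRisk_eq_max (by linarith), lt_max_iff]
  rcases ht.lt_or_gt with ht | ht
  · left
    nlinarith [mul_pos (sub_pos.2 hlam) (sub_pos.2 ht)]
  · right
    linarith

theorem foldedRisk_zero (lam : ℝ) : foldedRisk lam 0 = 1 / 4 := by
  norm_num [foldedRisk]

theorem foldedRisk_three_div_thirteen (lam : ℝ) :
    foldedRisk lam (3 / 13) = 19 / 52 - 3 / 4 * lam := by
  norm_num [foldedRisk]
  ring

/-- Optimization of Alice's risk f(ω) = R_B(ω) - λ R_E(ω) over the randomised response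
family: the minimum over [0,1] is 1/4 when λ ≤ 2/13 and 19/52 - (3/4)λ when λ ≥ 2/13;
the set of minimizers is exactly {3/13, 10/13} when λ > 2/13 and exactly {0, 1} when
λ < 2/13. -/
theorem rr_optimization (lam : ℝ) (hlam : 0 < lam) (f : ℝ → ℝ)
    (hf : ∀ ω, f ω = RBfun ω - lam * REfun ω) :
    (lam ≤ 2/13 → IsLeast (f '' Set.Icc (0:ℝ) 1) (1/4)) ∧
    (2/13 ≤ lam → IsLeast (f '' Set.Icc (0:ℝ) 1) (19/52 - 3/4 * lam)) ∧
    (2/13 < lam →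
      {ω ∈ Set.Icc (0:ℝ) 1 | ∀ ω' ∈ Set.Icc (0:ℝ) 1, f ω ≤ f ω'}
        = ({3/13, 10/13} : Set ℝ)) ∧
    (lam < 2/13 →
      {ω ∈ Set.Icc (0:ℝ) 1 | ∀ ω' ∈ Set.Icc (0:ℝ) 1, f ω ≤ f ω'}
        = ({0, 1} : Set ℝ)) := by
  have hfold : ∀ ω, f ω = foldedRisk lam (min ω (1 - ω)) := fun ω =>
    (hf ω).trans (RBfun_sub_mul_REfun lam ω)
  have h0 : (0 : ℝ) ∈ Icc (0 : ℝ) (1 / 2) := by norm_num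
  have h3 : (3 / 13 : ℝ) ∈ Icc (0 : ℝ) (1 / 2) := by norm_num
  refine ⟨fun hl => ?_, fun hl => ?_, fun hl => ?_, fun hl => ?_⟩
  · exact isLeast_image_Icc_of_fold hfold h0 (foldedRisk_zero lam)
      fun t ht => quarter_le_foldedRisk hlam.le hl ht
  · exact isLeast_image_Icc_of_fold hfold h3 (foldedRisk_three_div_thirteen lam)
      fun t _ => le_foldedRisk hl t
  · rw [show (10 / 13 : ℝ) = 1 - 3 / 13 by norm_num]
    exact setOf_forall_le_eq_pair_of_fold hfold h3 (foldedRisk_three_div_thirteen lam)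
      fun t _ ht => lt_foldedRisk hl ht
  · simpa only [sub_zero] using setOf_forall_le_eq_pair_of_fold hfold h0 (foldedRisk_zero lam)
      fun t ht ht0 => quarter_lt_foldedRisk hlam.le hl (ht.lt_of_ne' ht0)
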